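/- Comparison principle for the semi-discrete scheme: let h ∈ (0,1), N ≥ max{1, ‖f‖_∞/2}, and write c_0(t,x) := c(t,x,α_0(t,x)), f_0(t,x) := f(t,x,α_0(t,x)). Suppose v, ṽ : [0,T]×ℝ^d → ℝ are bounded, continuous, differentiable in t, v is a supersolution (∂_t v(t,x) + c_0(t,x) + ∇^h v(t,x)·f_0(t,x) + N h Δ^h v(t,x) ≤ 0 for all (t,x) ∈ (0,T)×ℝ^d) and ṽ is a subsolution (the same expression with ṽ is ≥ 0 on (0,T)×ℝ^d), and ṽ(T,x) ≤ v(T,x) for all x ∈ ℝ^d. Then ṽ ≤ v on all of [0,T]×ℝ^d. -/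

import Mathlib

open scoped RealInnerProductSpace
open MeasureTheory Filter Topology

noncomputable section

abbrev Rd (d : ℕ) := EuclideanSpace ℝ (Fin d)
abbrev Rm (m : ℕ) := EuclideanSpace ℝ (Fin m)

/-- Discrete gradient `∇ʰφ` in space. -/
def dGrad (d : ℕ) (h : ℝ) (φ : Rd d → ℝ) (x : Rd d) : Rd d :=
  (WithLp.equiv 2 (Fin d → ℝ)).symm fun i =>
    (φ (x + h • EuclideanSpace.single i 1) - φ (x - h • EuclideanSpace.single i 1)) / (2 * h)

/-- Discrete Laplacian `Δʰφ` in space. -/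
def dLap (d : ℕ) (h : ℝ) (φ : Rd d → ℝ) (x : Rd d) : ℝ :=
  ∑ i, (φ (x + h • EuclideanSpace.single i 1) - 2 * φ x + φ (x - h • EuclideanSpace.single i 1)) / h ^ 2

/-! With `U = w - v` and any `M ≥ 0` bounding `U` on `[0,T] × ℝᵈ`, the scheme is monotone: for
`N ≥ ‖f‖/2` each neighbour value enters with the nonnegative weight `(2N ± fᵢ)/(2h)`, so
subtracting the two inequalities gives `∂ₜU ≥ L (U - M)` with `L = 2dN/h`. Integrating backwards
from `U(T) ≤ 0` yields `U ≤ M (1 - e^{-LT})`; taking `M = sup U` forces `sup U ≤ 0`. -/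

open Real Set

theorem inner_dGrad_eq_sum {d : ℕ} (h : ℝ) (φ : Rd d → ℝ) (x b : Rd d) :
    ⟪dGrad d h φ x, b⟫ = ∑ i, (φ (x + h • EuclideanSpace.single i 1)
      - φ (x - h • EuclideanSpace.single i 1)) / (2 * h) * b i := by
  simp only [dGrad, PiLp.inner_apply, RCLike.inner_apply, conj_trivial]
  exact Finset.sum_congr rfl fun i _ => mul_comm _ _

theorem dGrad_sub {d : ℕ} (h : ℝ) (φ ψ : Rd d → ℝ) (x : Rd d) :
    dGrad d h (φ - ψ) x = dGrad d h φ x - dGrad d h ψ x := by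
  ext i
  simp only [dGrad, Pi.sub_apply, WithLp.equiv_symm_apply, PiLp.sub_apply]
  ring

theorem dLap_sub {d : ℕ} (h : ℝ) (φ ψ : Rd d → ℝ) (x : Rd d) :
    dLap d h (φ - ψ) x = dLap d h φ x - dLap d h ψ x := by
  simp only [dLap, Pi.sub_apply, ← Finset.sum_sub_distrib]
  exact Finset.sum_congr rfl fun i _ => by ring

theorem centered_step_le {h N β M φ φp φm : ℝ} (hh : 0 < h) (hβ : |β| ≤ 2 * N)
    (hp : φp ≤ M) (hm : φm ≤ M) :
    (φp - φm) / (2 * h) * β + N * h * ((φp - 2 * φ + φm) / h ^ 2) ≤ 2 * N / h * (M - φ) := by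
  obtain ⟨hβl, hβr⟩ := abs_le.1 hβ
  have hweights : 2 * N / h * (M - φ) - ((φp - φm) / (2 * h) * β + N * h * ((φp - 2 * φ + φm) / h ^ 2))
      = ((2 * N + β) * (M - φp) + (2 * N - β) * (M - φm)) / (2 * h) := by
    field_simp
    ring
  have : 0 ≤ ((2 * N + β) * (M - φp) + (2 * N - β) * (M - φm)) / (2 * h) := by
    apply div_nonneg _ (by positivity)
    exact add_nonneg (mul_nonneg (by linarith) (by linarith)) (mul_nonneg (by linarith) (by linarith))
  linarith

theorem inner_dGrad_add_dLap_le {d : ℕ} {h N M : ℝ} {φ : Rd d → ℝ} {b : Rd d} (hh : 0 < h)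
    (hb : ‖b‖ ≤ 2 * N) (hφ : ∀ y, φ y ≤ M) (x : Rd d) :
    ⟪dGrad d h φ x, b⟫ + N * h * dLap d h φ x ≤ 2 * d * N / h * (M - φ x) := by
  rw [inner_dGrad_eq_sum, dLap, Finset.mul_sum, ← Finset.sum_add_distrib]
  calc _ ≤ ∑ _i : Fin d, 2 * N / h * (M - φ x) := Finset.sum_le_sum fun i _ =>
        centered_step_le hh ((PiLp.norm_apply_le b i).trans hb) (hφ _) (hφ _)
    _ = 2 * d * N / h * (M - φ x) := by
      rw [Finset.sum_const, Finset.card_univ, Fintype.card_fin, nsmul_eq_mul]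
      ring

theorem le_exp_mul_of_mul_le_deriv {g g' : ℝ → ℝ} {a b L : ℝ} (hab : a ≤ b)
    (hc : ContinuousOn g (Icc a b)) (hd : ∀ s ∈ Ioo a b, HasDerivAt g (g' s) s)
    (hg : ∀ s ∈ Ioo a b, L * g s ≤ g' s) :
    g a ≤ exp (-(L * (b - a))) * g b := by
  have hmono : MonotoneOn (fun s => exp (-(L * s)) * g s) (Icc a b) := by
    refine monotoneOn_of_hasDerivWithinAt_nonneg (f' := fun s => exp (-(L * s)) * (g' s - L * g s))
      (convex_Icc a b)
      ((continuous_exp.comp (continuous_const.mul continuous_id).neg).continuousOn.mul hc)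
      (fun s hs => ?_) (fun s hs => ?_)
    · rw [interior_Icc] at hs
      have hexp : HasDerivAt (fun s => exp (-(L * s))) (exp (-(L * s)) * -L) s := by
        simpa using ((hasDerivAt_id s).const_mul L).fun_neg.exp
      exact ((hexp.fun_mul (hd s hs)).congr_deriv (by ring)).hasDerivWithinAt
    · rw [interior_Icc] at hs
      exact mul_nonneg (exp_pos _).le (sub_nonneg.2 (hg s hs))
  have hab' : exp (-(L * a)) * g a ≤ exp (-(L * b)) * g b := hmono ⟨le_rfl, hab⟩ ⟨hab, le_rfl⟩ hab
  have hsplit : exp (-(L * a)) * exp (-(L * (b - a))) = exp (-(L * b)) := by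
    rw [← exp_add]; ring_nf
  rw [← hsplit, mul_assoc] at hab'
  exact le_of_mul_le_mul_left hab' (exp_pos _)

theorem nonpos_of_le_mul_one_sub {α : Type*} {s : Set α} {u : α → ℝ} {ε : ℝ} (hε : 0 < ε)
    (hu : BddAbove (u '' s))
    (h : ∀ M, 0 ≤ M → (∀ a ∈ s, u a ≤ M) → ∀ a ∈ s, u a ≤ M * (1 - ε)) :
    ∀ a ∈ s, u a ≤ 0 := by
  intro a ha
  by_contra! hpos
  have hS : ∀ b ∈ s, u b ≤ sSup (u '' s) := fun b hb => le_csSup hu (mem_image_of_mem u hb)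
  have hSpos : 0 < sSup (u '' s) := hpos.trans_le (hS a ha)
  have hle : sSup (u '' s) ≤ sSup (u '' s) * (1 - ε) :=
    csSup_le ⟨u a, mem_image_of_mem u ha⟩ (forall_mem_image.2 (h _ hSpos.le hS))
  nlinarith

theorem mul_sub_le_sub_of_subsolution_of_supersolution {d : ℕ} {h N M a a' c₀ : ℝ}
    {φ ψ : Rd d → ℝ} {b x : Rd d} (hh : 0 < h) (hb : ‖b‖ ≤ 2 * N) (hM : ∀ y, φ y - ψ y ≤ M)
    (hφ : 0 ≤ a + c₀ + ⟪dGrad d h φ x, b⟫ + N * h * dLap d h φ x)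
    (hψ : a' + c₀ + ⟪dGrad d h ψ x, b⟫ + N * h * dLap d h ψ x ≤ 0) :
    2 * d * N / h * (φ x - ψ x - M) ≤ a - a' := by
  have hgap := inner_dGrad_add_dLap_le (φ := φ - ψ) hh hb hM x
  rw [dGrad_sub, inner_sub_left, dLap_sub, Pi.sub_apply] at hgap
  linarith

theorem semidiscrete_comparison_principle_general
    (T : ℝ) (d m : ℕ)
    (c : ℝ → Rd d → Rm m → ℝ) (f : ℝ → Rd d → Rm m → Rd d)
    (α0 : ℝ → Rd d → Rm m) (Fb : ℝ)
    (hfb : ∀ t x a, ‖f t x a‖ ≤ Fb)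
    (h N : ℝ) (hh : h ∈ Set.Ioo (0:ℝ) 1) (hN : max 1 (Fb / 2) ≤ N)
    (v w : ℝ → Rd d → ℝ)
    (hvb : ∃ M, ∀ t x, |v t x| ≤ M) (hwb : ∃ M, ∀ t x, |w t x| ≤ M)
    (hvc : Continuous (fun p : ℝ × Rd d => v p.1 p.2))
    (hwc : Continuous (fun p : ℝ × Rd d => w p.1 p.2))
    (hvd : ∀ x, ∀ t ∈ Set.Ioo (0:ℝ) T, DifferentiableAt ℝ (fun s => v s x) t)
    (hwd : ∀ x, ∀ t ∈ Set.Ioo (0:ℝ) T, DifferentiableAt ℝ (fun s => w s x) t)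
    (hsuper : ∀ x, ∀ t ∈ Set.Ioo (0:ℝ) T,
      deriv (fun s => v s x) t + c t x (α0 t x)
        + ⟪dGrad d h (fun y => v t y) x, f t x (α0 t x)⟫
        + N * h * dLap d h (fun y => v t y) x ≤ 0)
    (hsub : ∀ x, ∀ t ∈ Set.Ioo (0:ℝ) T,
      0 ≤ deriv (fun s => w s x) t + c t x (α0 t x)
        + ⟪dGrad d h (fun y => w t y) x, f t x (α0 t x)⟫
        + N * h * dLap d h (fun y => w t y) x)
    (hterm : ∀ x, w T x ≤ v T x) :
    ∀ t ∈ Set.Icc (0:ℝ) T, ∀ x, w t x ≤ v t x := by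
  have hN0 : 0 ≤ N := (zero_le_one.trans (le_max_left _ _)).trans hN
  have hb (t x) : ‖f t x (α0 t x)‖ ≤ 2 * N := by linarith [hfb t x (α0 t x), le_max_right 1 (Fb / 2)]
  set L := 2 * (d : ℝ) * N / h
  have hL : 0 ≤ L := by have := hh.1; positivity
  obtain ⟨Mv, hMv⟩ := hvb
  obtain ⟨Mw, hMw⟩ := hwb
  have hbdd : BddAbove ((fun p : ℝ × Rd d => w p.1 p.2 - v p.1 p.2) '' (Icc 0 T ×ˢ univ)) :=
    ⟨Mw + Mv, by
      rintro _ ⟨p, -, rfl⟩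
      linarith [(abs_le.1 (hMw p.1 p.2)).2, (abs_le.1 (hMv p.1 p.2)).1]⟩
  have hcontract : ∀ M, 0 ≤ M → (∀ p ∈ Icc 0 T ×ˢ univ, w p.1 p.2 - v p.1 p.2 ≤ M) →
      ∀ p ∈ Icc 0 T ×ˢ (univ : Set (Rd d)), w p.1 p.2 - v p.1 p.2 ≤ M * (1 - exp (-(L * T))) := by
    rintro M hM0 hM ⟨t, x⟩ ⟨ht, -⟩
    have hdecay : w t x - v t x - M ≤ exp (-(L * (T - t))) * (w T x - v T x - M) := by
      refine le_exp_mul_of_mul_le_deriv (g' := fun s => deriv (w · x) s - deriv (v · x) s) ht.2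
        (((hwc.sub hvc).comp (continuous_id.prodMk continuous_const)).sub
          continuous_const).continuousOn (fun s hs => ?_) (fun s hs => ?_)
      all_goals have hs' : s ∈ Ioo 0 T := ⟨ht.1.trans_lt hs.1, hs.2⟩
      · exact ((hwd x s hs').hasDerivAt.sub (hvd x s hs').hasDerivAt).sub_const M
      · exact mul_sub_le_sub_of_subsolution_of_supersolution hh.1 (hb s x)
          (fun y => hM (s, y) ⟨Ioo_subset_Icc_self hs', trivial⟩) (hsub x s hs') (hsuper x s hs')
    calc w t x - v t x ≤ M + exp (-(L * (T - t))) * (w T x - v T x - M) := by linarith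
      _ ≤ M - exp (-(L * (T - t))) * M := by nlinarith [hterm x, exp_pos (-(L * (T - t)))]
      _ ≤ M - exp (-(L * T)) * M := by gcongr; linarith [ht.1]
      _ = M * (1 - exp (-(L * T))) := by ring
  exact fun t ht x => sub_nonpos.1 <|
    nonpos_of_le_mul_one_sub (exp_pos _) hbdd hcontract (t, x) ⟨ht, trivial⟩

/-- Comparison principle for the semi-discrete scheme (Lemma 2.1). -/
theorem semidiscrete_comparison_principle
    (T : ℝ) (hT : 1 ≤ T) (d m : ℕ)
    (A : Set (Rm m)) (hA : IsCompact A)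
    (c : ℝ → Rd d → Rm m → ℝ) (f : ℝ → Rd d → Rm m → Rd d) (q : Rd d → ℝ)
    (α0 : ℝ → Rd d → Rm m) (Cb Fb K : ℝ)
    (hcb : ∀ t x a, |c t x a| ≤ Cb)
    (hfb : ∀ t x a, ‖f t x a‖ ≤ Fb)
    (hqb : ∀ x, |q x| ≤ Cb)
    (hcL : LipschitzWith (Real.toNNReal K) (fun p : ℝ × Rd d × Rm m => c p.1 p.2.1 p.2.2))
    (hfL : LipschitzWith (Real.toNNReal K) (fun p : ℝ × Rd d × Rm m => f p.1 p.2.1 p.2.2))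
    (hqL : LipschitzWith (Real.toNNReal K) q)
    (hα0A : ∀ t x, α0 t x ∈ A)
    (hα0L : LipschitzWith (Real.toNNReal K) (fun p : ℝ × Rd d => α0 p.1 p.2))
    (h N : ℝ) (hh : h ∈ Set.Ioo (0:ℝ) 1) (hN : max 1 (Fb / 2) ≤ N)
    (v w : ℝ → Rd d → ℝ)
    (hvb : ∃ M, ∀ t x, |v t x| ≤ M) (hwb : ∃ M, ∀ t x, |w t x| ≤ M)
    (hvc : Continuous (fun p : ℝ × Rd d => v p.1 p.2))
    (hwc : Continuous (fun p : ℝ × Rd d => w p.1 p.2))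
    (hvd : ∀ x, ∀ t ∈ Set.Ioo (0:ℝ) T, DifferentiableAt ℝ (fun s => v s x) t)
    (hwd : ∀ x, ∀ t ∈ Set.Ioo (0:ℝ) T, DifferentiableAt ℝ (fun s => w s x) t)
    (hsuper : ∀ x, ∀ t ∈ Set.Ioo (0:ℝ) T,
      deriv (fun s => v s x) t + c t x (α0 t x)
        + ⟪dGrad d h (fun y => v t y) x, f t x (α0 t x)⟫
        + N * h * dLap d h (fun y => v t y) x ≤ 0)
    (hsub : ∀ x, ∀ t ∈ Set.Ioo (0:ℝ) T,
      0 ≤ deriv (fun s => w s x) t + c t x (α0 t x)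
        + ⟪dGrad d h (fun y => w t y) x, f t x (α0 t x)⟫
        + N * h * dLap d h (fun y => w t y) x)
    (hterm : ∀ x, w T x ≤ v T x) :
    ∀ t ∈ Set.Icc (0:ℝ) T, ∀ x, w t x ≤ v t x :=
  semidiscrete_comparison_principle_general T d m c f α0 Fb hfb h N hh hN v w hvb hwb hvc hwc hvd
    hwd hsuper hsub hterm
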